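/- Let H : E° × ℝᵈ → ℝ be twice continuously differentiable and S twice continuously differentiable on E°. Define H̄(x,p) := 2H(x, p/2 + DS(x)/2). If (x(t), p(t)) solves the Hamilton equations for H on (0,T) with x(t) ∈ E°, then (x(t), 2p(t) − DS(x(t))) solves the Hamilton equations for H̄, and conversely. -/

import Mathlib

/-!
Write `m = q/2 + DS(x)/2` for the momentum at which `H` is evaluated in `H̄(x, q)`. The chain rule
gives `H̄_p(x, q) = H_p(x, m)` and `H̄_x(x, q) = 2 H_x(x, m) + D²S(x) H_p(x, m)`; the last term has
this form only because the Hessian of `S` is symmetric. Along a curve with `ẋ = H_p(x, p)` and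
`m = p`, that term is exactly `d/dt DS(x(t))`, so `q = 2p - DS(x)` satisfies `q̇ = -H̄_x` if and only
if `ṗ = -H_x`.
-/

/-- The `i`-th partial derivative (component of the gradient) of `f : (Fin d → ℝ) → ℝ`. -/
noncomputable def pgrad {d : ℕ} (f : (Fin d → ℝ) → ℝ) (x : Fin d → ℝ) : Fin d → ℝ :=
  fun i => fderiv ℝ f x (Pi.single i 1)

/-- Gradient of `H` in the momentum variable. -/
noncomputable def Hp {d : ℕ} (H : (Fin d → ℝ) → (Fin d → ℝ) → ℝ)
    (x p : Fin d → ℝ) : Fin d → ℝ := pgrad (H x) p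

/-- Gradient of `H` in the position variable. -/
noncomputable def Hx {d : ℕ} (H : (Fin d → ℝ) → (Fin d → ℝ) → ℝ)
    (x p : Fin d → ℝ) : Fin d → ℝ := pgrad (fun y => H y p) x

theorem dotProduct_apply_single_eq {ι : Type*} [Fintype ι] [DecidableEq ι]
    (L : (ι → ℝ) →L[ℝ] ℝ) (v : ι → ℝ) : (fun i => L (Pi.single i 1)) ⬝ᵥ v = L v := by
  conv_rhs => rw [pi_eq_sum_univ' v]
  simp [dotProduct, mul_comm]

section Gradient

variable {d : ℕ}

theorem pgrad_dotProduct (f : (Fin d → ℝ) → ℝ) (x v : Fin d → ℝ) :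
    pgrad f x ⬝ᵥ v = fderiv ℝ f x v :=
  dotProduct_apply_single_eq _ v

theorem HasFDerivAt.pgrad_eq {f : (Fin d → ℝ) → ℝ} {L : (Fin d → ℝ) →L[ℝ] ℝ}
    {x : Fin d → ℝ} (hf : HasFDerivAt f L x) : pgrad f x = fun i => L (Pi.single i 1) := by
  rw [← hf.fderiv]
  rfl

variable {S : (Fin d → ℝ) → ℝ} {x : Fin d → ℝ}

theorem hasFDerivAt_pgrad (hS : DifferentiableAt ℝ (fderiv ℝ S) x) :
    HasFDerivAt (pgrad S) ((ContinuousLinearMap.pi fun i =>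
      ContinuousLinearMap.apply ℝ ℝ (Pi.single i 1)).comp (fderiv ℝ (fderiv ℝ S) x)) x :=
  ((ContinuousLinearMap.pi fun i : Fin d =>
    ContinuousLinearMap.apply ℝ ℝ (Pi.single i 1)).hasFDerivAt.comp x hS.hasFDerivAt :)

theorem fderiv_pgrad_apply (hS : DifferentiableAt ℝ (fderiv ℝ S) x) (v : Fin d → ℝ) :
    fderiv ℝ (pgrad S) x v = fun i => fderiv ℝ (fderiv ℝ S) x v (Pi.single i 1) := by
  rw [(hasFDerivAt_pgrad hS).fderiv]
  rfl

theorem ContDiffAt.differentiableAt_fderiv (hS : ContDiffAt ℝ 2 S x) :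
    DifferentiableAt ℝ (fderiv ℝ S) x :=
  (hS.fderiv_right (m := 1) le_rfl).differentiableAt one_ne_zero

theorem ContDiffAt.differentiableAt_pgrad (hS : ContDiffAt ℝ 2 S x) :
    DifferentiableAt ℝ (pgrad S) x :=
  (hasFDerivAt_pgrad hS.differentiableAt_fderiv).differentiableAt

theorem fderiv_pgrad_dotProduct_comm (hS : ContDiffAt ℝ 2 S x) (v w : Fin d → ℝ) :
    fderiv ℝ (pgrad S) x v ⬝ᵥ w = fderiv ℝ (pgrad S) x w ⬝ᵥ v := by
  rw [fderiv_pgrad_apply hS.differentiableAt_fderiv, fderiv_pgrad_apply hS.differentiableAt_fderiv,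
    dotProduct_apply_single_eq, dotProduct_apply_single_eq]
  exact hS.isSymmSndFDerivAt (by simp) v w

end Gradient

section PartialDerivatives

variable {d : ℕ} {H : (Fin d → ℝ) → (Fin d → ℝ) → ℝ}

theorem fderiv_uncurry_apply {x p : Fin d → ℝ}
    (hH : DifferentiableAt ℝ (Function.uncurry H) (x, p)) (u v : Fin d → ℝ) :
    fderiv ℝ (Function.uncurry H) (x, p) (u, v) = Hx H x p ⬝ᵥ u + Hp H x p ⬝ᵥ v := by
  have hx : HasFDerivAt (fun y => H y p) ((fderiv ℝ (Function.uncurry H) (x, p)).comp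
      (ContinuousLinearMap.inl ℝ (Fin d → ℝ) (Fin d → ℝ))) x :=
    (hH.hasFDerivAt.comp x (hasFDerivAt_prodMk_left (𝕜 := ℝ) x p) :)
  have hp : HasFDerivAt (H x) ((fderiv ℝ (Function.uncurry H) (x, p)).comp
      (ContinuousLinearMap.inr ℝ (Fin d → ℝ) (Fin d → ℝ))) p :=
    (hH.hasFDerivAt.comp p (hasFDerivAt_prodMk_right (𝕜 := ℝ) x p) :)
  rw [Hx, Hp, pgrad_dotProduct, pgrad_dotProduct, hx.fderiv, hp.fderiv]
  simp [← map_add]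

theorem HasFDerivAt.uncurry_comp {E : Type*} [NormedAddCommGroup E] [NormedSpace ℝ E]
    {a b : E → Fin d → ℝ} {a' b' : E →L[ℝ] Fin d → ℝ} {y : E}
    (ha : HasFDerivAt a a' y) (hb : HasFDerivAt b b' y)
    (hH : DifferentiableAt ℝ (Function.uncurry H) (a y, b y)) :
    HasFDerivAt (fun y => H (a y) (b y))
      ((fderiv ℝ (Function.uncurry H) (a y, b y)).comp (a'.prod b')) y :=
  (hH.hasFDerivAt.comp y (ha.prodMk hb) :)

end PartialDerivatives

noncomputable def shiftedHamiltonian {d : ℕ} (H : (Fin d → ℝ) → (Fin d → ℝ) → ℝ)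
    (S : (Fin d → ℝ) → ℝ) (x q : Fin d → ℝ) : ℝ :=
  2 * H x ((1 / 2 : ℝ) • q + (1 / 2 : ℝ) • pgrad S x)

section ShiftedHamiltonian

variable {d : ℕ} {H : (Fin d → ℝ) → (Fin d → ℝ) → ℝ} {S : (Fin d → ℝ) → ℝ} {x q : Fin d → ℝ}

theorem Hp_shiftedHamiltonian
    (hH : DifferentiableAt ℝ (Function.uncurry H) (x, (1 / 2 : ℝ) • q + (1 / 2 : ℝ) • pgrad S x)) :
    Hp (shiftedHamiltonian H S) x q = Hp H x ((1 / 2 : ℝ) • q + (1 / 2 : ℝ) • pgrad S x) := by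
  have hm : HasFDerivAt (fun q : Fin d → ℝ => (1 / 2 : ℝ) • q + (1 / 2 : ℝ) • pgrad S x)
      ((1 / 2 : ℝ) • ContinuousLinearMap.id ℝ _) q :=
    (((hasFDerivAt_id (𝕜 := ℝ) q).const_smul (1 / 2 : ℝ)).add_const ((1 / 2 : ℝ) • pgrad S x) :)
  rw [Hp]
  unfold shiftedHamiltonian
  rw [((HasFDerivAt.uncurry_comp (hasFDerivAt_const x q) hm hH).const_mul
    2).pgrad_eq]
  funext i
  simp only [smul_apply, ContinuousLinearMap.comp_apply, ContinuousLinearMap.prod_apply,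
    zero_apply, ContinuousLinearMap.coe_id', id_eq, fderiv_uncurry_apply hH, dotProduct_zero,
    dotProduct_smul, dotProduct_single, smul_eq_mul]
  ring

theorem Hx_shiftedHamiltonian
    (hH : DifferentiableAt ℝ (Function.uncurry H) (x, (1 / 2 : ℝ) • q + (1 / 2 : ℝ) • pgrad S x))
    (hS : ContDiffAt ℝ 2 S x) :
    Hx (shiftedHamiltonian H S) x q =
      (2 : ℝ) • Hx H x ((1 / 2 : ℝ) • q + (1 / 2 : ℝ) • pgrad S x) +
        fderiv ℝ (pgrad S) x (Hp H x ((1 / 2 : ℝ) • q + (1 / 2 : ℝ) • pgrad S x)) := by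
  have hm : HasFDerivAt (fun y : Fin d → ℝ => (1 / 2 : ℝ) • q + (1 / 2 : ℝ) • pgrad S y)
      ((1 / 2 : ℝ) • fderiv ℝ (pgrad S) x) x :=
    ((hS.differentiableAt_pgrad.hasFDerivAt.const_smul (1 / 2 : ℝ)).const_add
      ((1 / 2 : ℝ) • q) :)
  rw [Hx]
  unfold shiftedHamiltonian
  rw [((HasFDerivAt.uncurry_comp (a := fun y => y) (hasFDerivAt_id x) hm hH).const_mul
    2).pgrad_eq]
  funext i
  set v := Hp H x ((1 / 2 : ℝ) • q + (1 / 2 : ℝ) • pgrad S x)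
  have hsymm : fderiv ℝ (pgrad S) x v i = v ⬝ᵥ fderiv ℝ (pgrad S) x (Pi.single i 1) := by
    rw [← mul_one (fderiv ℝ (pgrad S) x v i), ← dotProduct_single,
      fderiv_pgrad_dotProduct_comm hS, dotProduct_comm]
  simp only [smul_apply, ContinuousLinearMap.comp_apply, ContinuousLinearMap.prod_apply,
    ContinuousLinearMap.coe_id', Pi.add_apply, Pi.smul_apply, id_eq, fderiv_uncurry_apply hH,
    dotProduct_smul, dotProduct_single, smul_eq_mul, hsymm]
  ring

end ShiftedHamiltonian

theorem stmt_9_general (d : ℕ) (H : (Fin d → ℝ) → (Fin d → ℝ) → ℝ) (S : (Fin d → ℝ) → ℝ)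
    (hH : ContDiff ℝ 2 (fun z : (Fin d → ℝ) × (Fin d → ℝ) => H z.1 z.2))
    (hS : ContDiff ℝ 2 S)
    (Hbar : (Fin d → ℝ) → (Fin d → ℝ) → ℝ)
    (hHbar : ∀ x q, Hbar x q = 2 * H x ((1 / 2 : ℝ) • q + (1 / 2 : ℝ) • pgrad S x))
    (T : ℝ)
    (x p : ℝ → Fin d → ℝ)
    (q : ℝ → Fin d → ℝ) (hq : ∀ t, q t = (2 : ℝ) • p t - pgrad S (x t)) :
    (∀ t ∈ Set.Ioo (0 : ℝ) T,
      HasDerivAt x (Hp H (x t) (p t)) t ∧ HasDerivAt p (-(Hx H (x t) (p t))) t) ↔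
    (∀ t ∈ Set.Ioo (0 : ℝ) T,
      HasDerivAt x (Hp Hbar (x t) (q t)) t ∧ HasDerivAt q (-(Hx Hbar (x t) (q t))) t) := by
  obtain rfl : Hbar = shiftedHamiltonian H S := funext fun x => funext (hHbar x)
  have hp : ∀ t, p t = (1 / 2 : ℝ) • q t + (1 / 2 : ℝ) • pgrad S (x t) := fun t => by
    rw [hq]; module
  have hHdiff : Differentiable ℝ (Function.uncurry H) := hH.differentiable two_ne_zero
  refine forall₂_congr fun t _ => ?_
  rw [Hp_shiftedHamiltonian (hHdiff _), Hx_shiftedHamiltonian (hHdiff _) hS.contDiffAt, ← hp]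
  refine and_congr_right fun hx => ?_
  have hG : HasDerivAt (fun s => pgrad S (x s)) (fderiv ℝ (pgrad S) (x t) (Hp H (x t) (p t))) t :=
    hS.contDiffAt.differentiableAt_pgrad.hasFDerivAt.comp_hasDerivAt t hx
  constructor
  · intro hp'
    have hq' : HasDerivAt (fun s => (2 : ℝ) • p s - pgrad S (x s))
        ((2 : ℝ) • -Hx H (x t) (p t) - fderiv ℝ (pgrad S) (x t) (Hp H (x t) (p t))) t :=
      (hp'.const_smul (2 : ℝ)).sub hG
    rw [← funext hq] at hq'
    exact hq'.congr_deriv (by module)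
  · intro hq'
    have hp' : HasDerivAt (fun s => (1 / 2 : ℝ) • q s + (1 / 2 : ℝ) • pgrad S (x s))
        ((1 / 2 : ℝ) • -((2 : ℝ) • Hx H (x t) (p t) + fderiv ℝ (pgrad S) (x t) (Hp H (x t) (p t)))
          + (1 / 2 : ℝ) • fderiv ℝ (pgrad S) (x t) (Hp H (x t) (p t))) t :=
      (hq'.const_smul (1 / 2 : ℝ)).add (hG.const_smul (1 / 2 : ℝ))
    rw [← funext hp] at hp'
    exact hp'.congr_deriv (by module)

theorem stmt_9 (d : ℕ) (H : (Fin d → ℝ) → (Fin d → ℝ) → ℝ) (S : (Fin d → ℝ) → ℝ)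
    (hH : ContDiff ℝ 2 (fun z : (Fin d → ℝ) × (Fin d → ℝ) => H z.1 z.2))
    (hS : ContDiff ℝ 2 S)
    (Hbar : (Fin d → ℝ) → (Fin d → ℝ) → ℝ)
    (hHbar : ∀ x q, Hbar x q = 2 * H x ((1 / 2 : ℝ) • q + (1 / 2 : ℝ) • pgrad S x))
    (T : ℝ) (hT : 0 < T)
    (x p : ℝ → Fin d → ℝ)
    (q : ℝ → Fin d → ℝ) (hq : ∀ t, q t = (2 : ℝ) • p t - pgrad S (x t)) :
    (∀ t ∈ Set.Ioo (0 : ℝ) T,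
      HasDerivAt x (Hp H (x t) (p t)) t ∧ HasDerivAt p (-(Hx H (x t) (p t))) t) ↔
    (∀ t ∈ Set.Ioo (0 : ℝ) T,
      HasDerivAt x (Hp Hbar (x t) (q t)) t ∧ HasDerivAt q (-(Hx Hbar (x t) (q t))) t) :=
  stmt_9_general d H S hH hS Hbar hHbar T x p q hq
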